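/- arXiv:quant-ph/0110125 — 3 statements merged into one kernel-verified Lean document; each statement's English description precedes it below -/
import Mathlib

section
/- (Key operator inequality.) ρ_n ≤ v(σ_n) · E_{σ_n}(ρ_n) in the Loewner order, where v(σ_n) is the number of distinct eigenvalues of σ_n and E_{σ_n}(ρ_n) is the pinching of ρ_n by σ_n. -/
/-!
Write `B = Cᴴ C`. If the Hermitian `P_μ` sum to `1`, then `Q_μ = C P_μ` satisfy `∑ Q_μ = C` and
`Q_μᴴ Q_μ = P_μ B P_μ`, so the pinching inequality `B ≤ |s| ∑ P_μ B P_μ` is the matrix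
Cauchy–Schwarz inequality `(∑ Q_μ)ᴴ (∑ Q_μ) ≤ |s| ∑ Q_μᴴ Q_μ`, which is half of
`∑_{μ,ν} (Q_μ - Q_ν)ᴴ (Q_μ - Q_ν) ≥ 0`. Tensor powers preserve positivity because
`(C^{⊗n})ᴴ C^{⊗n} = (Cᴴ C)^{⊗n}`.
-/

open Matrix Filter
open scoped ComplexOrder

noncomputable section

/-- Functional calculus for a Hermitian matrix: apply `f` to the eigenvalues. -/
def matFun {m : Type*} [Fintype m] [DecidableEq m] (f : ℝ → ℝ) (A : Matrix m m ℂ) :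
    Matrix m m ℂ :=
  if hA : A.IsHermitian then
    (hA.eigenvectorUnitary : Matrix m m ℂ) *
      Matrix.diagonal (fun i => (f (hA.eigenvalues i) : ℂ)) *
      star (hA.eigenvectorUnitary : Matrix m m ℂ)
  else 0

/-- Matrix logarithm (via functional calculus). -/
def matLog {m : Type*} [Fintype m] [DecidableEq m] (A : Matrix m m ℂ) : Matrix m m ℂ :=
  matFun Real.log A

/-- Real matrix power (via functional calculus). -/
def matRPow {m : Type*} [Fintype m] [DecidableEq m] (A : Matrix m m ℂ) (s : ℝ) :
    Matrix m m ℂ :=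
  matFun (fun x => x ^ s) A

open Classical in
/-- The finite set of (distinct, real) eigenvalues of a Hermitian matrix. -/
def eigFinset {m : Type*} [Fintype m] [DecidableEq m] (A : Matrix m m ℂ) : Finset ℝ :=
  if hA : A.IsHermitian then Finset.image hA.eigenvalues Finset.univ else ∅

/-- `v A`: the number of distinct eigenvalues of a Hermitian matrix `A`. -/
def numEig {m : Type*} [Fintype m] [DecidableEq m] (A : Matrix m m ℂ) : ℕ :=
  (eigFinset A).card

/-- The spectral projection of a Hermitian matrix `A` corresponding to eigenvalue `μ`. -/
def specProj {m : Type*} [Fintype m] [DecidableEq m] (A : Matrix m m ℂ) (μ : ℝ) :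
    Matrix m m ℂ :=
  matFun (fun x => if x = μ then 1 else 0) A

/-- The pinching `E_A(B) = Σ_i E_i B E_i` of `B` by the Hermitian matrix `A`. -/
def pinch {m : Type*} [Fintype m] [DecidableEq m] (A B : Matrix m m ℂ) : Matrix m m ℂ :=
  ∑ μ ∈ eigFinset A, specProj A μ * B * specProj A μ

/-- `{X > 0}`: the projection onto the strictly positive eigenspaces of a Hermitian `X`. -/
def posProj {m : Type*} [Fintype m] [DecidableEq m] (X : Matrix m m ℂ) : Matrix m m ℂ :=
  matFun (fun x => if 0 < x then 1 else 0) X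

/-- The `n`-fold tensor (Kronecker) power of a `d × d` matrix, realized on the index type
`Fin n → Fin d`. -/
def tensorPow {d : ℕ} (ρ : Matrix (Fin d) (Fin d) ℂ) (n : ℕ) :
    Matrix (Fin n → Fin d) (Fin n → Fin d) ℂ :=
  fun x y => ∏ i, ρ (x i) (y i)

/-- A density matrix: positive semidefinite with unit trace. -/
def IsDensity {m : Type*} [Fintype m] [DecidableEq m] (ρ : Matrix m m ℂ) : Prop :=
  ρ.PosSemidef ∧ ρ.trace = 1

/-- A test: an operator `A` with `0 ≤ A ≤ I` in the Loewner order. -/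
def IsTest {m : Type*} [Fintype m] [DecidableEq m] (A : Matrix m m ℂ) : Prop :=
  A.PosSemidef ∧ (1 - A).PosSemidef

/-- The quantum relative entropy `D(ρ‖σ) = Tr[ρ (log ρ − log σ)]`. -/
def relEnt {m : Type*} [Fintype m] [DecidableEq m] (ρ σ : Matrix m m ℂ) : ℝ :=
  ((ρ * (matLog ρ - matLog σ)).trace).re

/-- The error probability of the first kind, `α_n(A) = Tr[ρ_n (I − A)]`. -/
def alphaErr {d : ℕ} (ρ : Matrix (Fin d) (Fin d) ℂ) (n : ℕ)
    (A : Matrix (Fin n → Fin d) (Fin n → Fin d) ℂ) : ℝ :=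
  ((tensorPow ρ n * (1 - A)).trace).re

/-- The error probability of the second kind, `β_n(A) = Tr[σ_n A]`. -/
def betaErr {d : ℕ} (σ : Matrix (Fin d) (Fin d) ℂ) (n : ℕ)
    (A : Matrix (Fin n → Fin d) (Fin n → Fin d) ℂ) : ℝ :=
  ((tensorPow σ n * A).trace).re

/-- `β*_n(ε)`: the minimum type-II error among tests with type-I error at most `ε`. -/
def betaStar {d : ℕ} (ρ σ : Matrix (Fin d) (Fin d) ℂ) (n : ℕ) (ε : ℝ) : ℝ :=
  sInf {b : ℝ | ∃ A : Matrix (Fin n → Fin d) (Fin n → Fin d) ℂ,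
    IsTest A ∧ alphaErr ρ n A ≤ ε ∧ b = betaErr σ n A}

namespace Matrix

variable {𝕜 m n ι : Type*} [RCLike 𝕜] [Fintype m] [Fintype n]

theorem posSemidef_card_smul_sum_conjTranspose_mul_self_sub (s : Finset ι)
    (Q : ι → Matrix m n 𝕜) :
    ((s.card : 𝕜) • ∑ i ∈ s, (Q i)ᴴ * Q i - (∑ i ∈ s, Q i)ᴴ * ∑ i ∈ s, Q i).PosSemidef := by
  have hexpand : ∀ i j, (Q i - Q j)ᴴ * (Q i - Q j)
      = (Q i)ᴴ * Q i + (Q j)ᴴ * Q j - ((Q i)ᴴ * Q j + (Q j)ᴴ * Q i) := by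
    intro i j
    simp only [conjTranspose_sub, Matrix.sub_mul, Matrix.mul_sub]
    abel
  have hsq : ∑ i ∈ s, ∑ j ∈ s, (Q i - Q j)ᴴ * (Q i - Q j)
      = (2 : 𝕜) • ((s.card : 𝕜) • ∑ i ∈ s, (Q i)ᴴ * Q i - (∑ i ∈ s, Q i)ᴴ * ∑ i ∈ s, Q i) := by
    simp only [hexpand, Finset.sum_sub_distrib, Finset.sum_add_distrib, Finset.sum_const,
      Finset.sum_comm (s := s) (t := s) (f := fun i j => (Q j)ᴴ * Q i), conjTranspose_sum,
      Matrix.sum_mul, Matrix.mul_sum, ← Finset.smul_sum, ← Nat.cast_smul_eq_nsmul 𝕜, smul_sub,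
      two_smul]
  have h := (posSemidef_sum s fun i _ => posSemidef_sum s fun j _ =>
    posSemidef_conjTranspose_mul_self (Q i - Q j)).smul (a := (2⁻¹ : 𝕜)) (by simp)
  rwa [hsq, smul_smul, inv_mul_cancel₀ two_ne_zero, one_smul] at h

open scoped MatrixOrder in
theorem PosSemidef.posSemidef_card_smul_sum_mul_mul_sub [DecidableEq m] {B : Matrix m m 𝕜}
    (hB : B.PosSemidef) {s : Finset ι} {P : ι → Matrix m m 𝕜}
    (hP : ∀ i ∈ s, (P i).IsHermitian) (hsum : ∑ i ∈ s, P i = 1) :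
    ((s.card : 𝕜) • ∑ i ∈ s, P i * B * P i - B).PosSemidef := by
  obtain ⟨C, rfl⟩ := CStarAlgebra.nonneg_iff_eq_star_mul_self.mp hB.nonneg
  have hCP : ∑ i ∈ s, C * P i = C := by
    rw [← Matrix.mul_sum, hsum, Matrix.mul_one]
  have hterm : ∀ i ∈ s, P i * (star C * C) * P i = (C * P i)ᴴ * (C * P i) := by
    intro i hi
    rw [conjTranspose_mul, (hP i hi).eq, star_eq_conjTranspose]
    simp only [Matrix.mul_assoc]
  rw [Finset.sum_congr rfl hterm, star_eq_conjTranspose]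
  simpa only [hCP] using posSemidef_card_smul_sum_conjTranspose_mul_self_sub s (C * P ·)

end Matrix

section Spectral

variable {m : Type*} [Fintype m] [DecidableEq m]

theorem isHermitian_matFun (f : ℝ → ℝ) (A : Matrix m m ℂ) : (matFun f A).IsHermitian := by
  unfold matFun
  split_ifs with hA
  · exact isHermitian_mul_mul_conjTranspose _
      (isHermitian_diagonal_of_self_adjoint _ (by ext; simp))
  · exact isHermitian_zero

theorem sum_specProj {A : Matrix m m ℂ} (hA : A.IsHermitian) :
    ∑ μ ∈ eigFinset A, specProj A μ = 1 := by
  have hdiag : ∑ μ ∈ Finset.univ.image hA.eigenvalues,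
      diagonal (fun i => ((if hA.eigenvalues i = μ then 1 else 0 : ℝ) : ℂ)) = 1 := by
    ext i j
    by_cases hij : i = j
    · subst hij
      simp [Matrix.sum_apply, apply_ite Complex.ofReal]
    · simp [Matrix.sum_apply, hij]
  simp only [eigFinset, specProj, matFun, dif_pos hA]
  rw [← Finset.sum_mul, ← Finset.mul_sum, hdiag, mul_one,
    Matrix.mem_unitaryGroup_iff.mp hA.eigenvectorUnitary.2]

theorem posSemidef_numEig_smul_pinch_sub {A B : Matrix m m ℂ} (hA : A.IsHermitian)
    (hB : B.PosSemidef) : ((numEig A : ℂ) • pinch A B - B).PosSemidef :=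
  hB.posSemidef_card_smul_sum_mul_mul_sub (fun _ _ => isHermitian_matFun _ _) (sum_specProj hA)

end Spectral

section TensorPow

variable {d : ℕ}

theorem tensorPow_mul (a b : Matrix (Fin d) (Fin d) ℂ) (n : ℕ) :
    tensorPow (a * b) n = tensorPow a n * tensorPow b n := by
  ext x y
  simp only [tensorPow, mul_apply, Finset.prod_univ_sum, Fintype.piFinset_univ,
    Finset.prod_mul_distrib]

theorem conjTranspose_tensorPow (a : Matrix (Fin d) (Fin d) ℂ) (n : ℕ) :
    (tensorPow a n)ᴴ = tensorPow aᴴ n := by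
  ext x y
  simp [tensorPow, conjTranspose_apply]

open scoped MatrixOrder in
theorem posSemidef_tensorPow {ρ : Matrix (Fin d) (Fin d) ℂ} (hρ : ρ.PosSemidef) (n : ℕ) :
    (tensorPow ρ n).PosSemidef := by
  obtain ⟨C, rfl⟩ := CStarAlgebra.nonneg_iff_eq_star_mul_self.mp hρ.nonneg
  rw [tensorPow_mul, star_eq_conjTranspose, ← conjTranspose_tensorPow]
  exact posSemidef_conjTranspose_mul_self _

end TensorPow

theorem key_operator_inequality_general {d : ℕ} (ρ σ : Matrix (Fin d) (Fin d) ℂ)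
    (hρ : IsDensity ρ) (hσ : IsDensity σ) (n : ℕ) :
    ((numEig (tensorPow σ n) : ℂ) • pinch (tensorPow σ n) (tensorPow ρ n)
      - tensorPow ρ n).PosSemidef :=
  posSemidef_numEig_smul_pinch_sub (posSemidef_tensorPow hσ.1 n).isHermitian
    (posSemidef_tensorPow hρ.1 n)

/-- **Key operator inequality.** `ρ_n ≤ v(σ_n) · E_{σ_n}(ρ_n)` in the Loewner order. -/
theorem key_operator_inequality {d : ℕ} (hd : 0 < d) (ρ σ : Matrix (Fin d) (Fin d) ℂ)
    (hρ : IsDensity ρ) (hσ : IsDensity σ) (n : ℕ) (hn : 1 ≤ n) :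
    ((numEig (tensorPow σ n) : ℂ) • pinch (tensorPow σ n) (tensorPow ρ n)
      - tensorPow ρ n).PosSemidef :=
  key_operator_inequality_general ρ σ hρ hσ n

end
end

section
/- (Hayashi's pinching inequality.) Let M = {M_i}_{i=1}^{v} be a PVM on a finite-dimensional complex Hilbert space, i.e., a family of v orthogonal projections with M_i M_j = 0 for i ≠ j and Σ_{i=1}^{v} M_i = I. Then for every density matrix ρ (positive semidefinite with trace 1), ρ ≤ v · Σ_{i=1}^{v} M_i ρ M_i in the Loewner order. -/
open Matrix Filter
open scoped ComplexOrder

noncomputable section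

/- Operator Cauchy–Schwarz: for `a ≥ 0`,
`n • ∑ cᵢ⋆ a cᵢ - (∑ cᵢ)⋆ a (∑ cᵢ) = ∑_{i<j} (cᵢ - cⱼ)⋆ a (cᵢ - cⱼ) ≥ 0`, with `n` the number of
terms. For a PVM put `cᵢ = Mᵢ` and `a = ρ`, so that `∑ cᵢ = 1`. -/

section StarOrderedRing

open Finset

variable {R ι : Type*} [Ring R] [StarRing R]

-- Induction over the family replaces the symmetric double sum, which would need a division by `2`.
theorem card_nsmul_sum_sub_star_sum_insert [DecidableEq ι] (a : R) (c : ι → R) {s : Finset ι}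
    {d : ι} (hd : d ∉ s) :
    #(insert d s) • ∑ i ∈ insert d s, star (c i) * a * c i
        - star (∑ i ∈ insert d s, c i) * a * ∑ i ∈ insert d s, c i
      = (#s • ∑ i ∈ s, star (c i) * a * c i - star (∑ i ∈ s, c i) * a * ∑ i ∈ s, c i)
        + ∑ i ∈ s, star (c i - c d) * a * (c i - c d) := by
  simp only [sum_insert hd, card_insert_of_notMem hd, succ_nsmul, star_add, star_sub, star_sum,
    add_mul, mul_add, sub_mul, mul_sub, sum_add_distrib, sum_sub_distrib, sum_mul, mul_sum,
    sum_const, nsmul_add]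
  abel

theorem star_sum_mul_mul_sum_le_card_nsmul_sum [PartialOrder R] [StarOrderedRing R] {a : R}
    (ha : 0 ≤ a) (c : ι → R) (s : Finset ι) :
    star (∑ i ∈ s, c i) * a * ∑ i ∈ s, c i ≤ #s • ∑ i ∈ s, star (c i) * a * c i := by
  classical
  induction s using Finset.induction_on with
  | empty => simp
  | insert d s hd ih =>
    rw [← sub_nonneg] at ih ⊢
    rw [card_nsmul_sum_sub_star_sum_insert a c hd]
    exact add_nonneg ih (sum_nonneg fun i _ => star_left_conjugate_nonneg ha _)

end StarOrderedRing

theorem hayashi_pinching_inequality_general {m : Type*} [Fintype m] [DecidableEq m]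
    (v : ℕ) (M : Fin v → Matrix m m ℂ)
    (hherm : ∀ i, (M i).IsHermitian) (hsum : ∑ i, M i = 1)
    (ρ : Matrix m m ℂ) (hρ : IsDensity ρ) :
    ((v : ℂ) • ∑ i, M i * ρ * M i - ρ).PosSemidef := by
  open scoped MatrixOrder in
  have h := star_sum_mul_mul_sum_le_card_nsmul_sum (nonneg_iff_posSemidef.mpr hρ.1) M .univ
  rw [← nonneg_iff_posSemidef, sub_nonneg, Nat.cast_smul_eq_nsmul]
  simpa [hsum, star_eq_conjTranspose, (hherm _).eq] using h

/-- **Hayashi's pinching inequality.** For a PVM `{M_i}_{i=1}^v` and a density matrix `ρ`,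
`ρ ≤ v · Σ_i M_i ρ M_i` in the Loewner order. -/
theorem hayashi_pinching_inequality {m : Type*} [Fintype m] [DecidableEq m]
    (v : ℕ) (M : Fin v → Matrix m m ℂ)
    (hherm : ∀ i, (M i).IsHermitian) (hproj : ∀ i, M i * M i = M i)
    (horth : ∀ i j, i ≠ j → M i * M j = 0) (hsum : ∑ i, M i = 1)
    (ρ : Matrix m m ℂ) (hρ : IsDensity ρ) :
    ((v : ℂ) • ∑ i, M i * ρ * M i - ρ).PosSemidef :=
  hayashi_pinching_inequality_general v M hherm hsum ρ hρ

end
end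

section
/- (Properties of the exponent function ψ.) Define ψ(s) = −log Tr[ρ σ^{s/2} ρ^{−s} σ^{s/2}] for real s. Then ψ(0) = 0 and ψ is differentiable at 0 with ψ'(0) = D(ρ‖σ). Consequently, for every real a < D(ρ‖σ) there exists s with 0 ≤ s ≤ 1 such that a·s − ψ(s) < 0. -/
open Matrix Filter
open scoped ComplexOrder

noncomputable section

/-!
Diagonalising, `σ^{s/2}` and `ρ^{-s}` are finite sums of scalar exponentials `λ^{s/2}`, `μ^{-s}`
times fixed rank-one projections, so `s ↦ Tr[ρ σ^{s/2} ρ^{-s} σ^{s/2}]` is differentiable, and by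
the product rule its derivative at `0` is `Tr[ρ (½ log σ - log ρ + ½ log σ)] = -D(ρ‖σ)`. Its value
at `0` is `Tr ρ = 1`, so `ψ = -log Tr[⋯]` has `ψ(0) = 0` and `ψ'(0) = D(ρ‖σ)`. For `a < D(ρ‖σ)`
the function `s ↦ a s - ψ(s)` vanishes at `0` with negative derivative, hence is negative just
to the right of `0`.
-/

open scoped Topology

section FunctionalCalculus

attribute [local instance] Matrix.frobeniusNormedAddCommGroup Matrix.frobeniusNormedSpace
  Matrix.frobeniusNormedRing Matrix.frobeniusNormedAlgebra

theorem HasDerivAt.re_trace {m : Type*} [Fintype m] {f : ℝ → Matrix m m ℂ} {f' : Matrix m m ℂ}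
    {x : ℝ} (hf : HasDerivAt f f' x) : HasDerivAt (fun t => (f t).trace.re) f'.trace.re x :=
  let L : Matrix m m ℂ →L[ℝ] ℝ :=
    Complex.reCLM.comp ((traceLinearMap m ℂ ℂ).toContinuousLinearMap.restrictScalars ℝ)
  L.hasFDerivAt.comp_hasDerivAt x hf

variable {m : Type*} [Fintype m] [DecidableEq m] {A : Matrix m m ℂ}

def Matrix.IsHermitian.eigenProj (hA : A.IsHermitian) (i : m) : Matrix m m ℂ :=
  (hA.eigenvectorUnitary : Matrix m m ℂ) * single i i 1 *
    star (hA.eigenvectorUnitary : Matrix m m ℂ)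

theorem Matrix.IsHermitian.sum_eigenProj (hA : A.IsHermitian) : ∑ i, hA.eigenProj i = 1 := by
  simp only [Matrix.IsHermitian.eigenProj, ← Finset.mul_sum, ← Finset.sum_mul, sum_single_one,
    mul_one]
  exact mem_unitaryGroup_iff.mp hA.eigenvectorUnitary.2

theorem matFun_eq_sum_smul_eigenProj (f : ℝ → ℝ) (hA : A.IsHermitian) :
    matFun f A = ∑ i, f (hA.eigenvalues i) • hA.eigenProj i := by
  simp only [matFun, dif_pos hA, ← sum_single_eq_diagonal, Finset.mul_sum, Finset.sum_mul]
  refine Finset.sum_congr rfl fun i _ => ?_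
  rw [Matrix.IsHermitian.eigenProj, ← smul_mul_assoc, ← mul_smul_comm, smul_single,
    Complex.real_smul, mul_one]

theorem matRPow_zero (hA : A.IsHermitian) : matRPow A 0 = 1 := by
  simp [matRPow, matFun_eq_sum_smul_eigenProj _ hA, hA.sum_eigenProj]

theorem hasDerivAt_matFun {f : ℝ → ℝ → ℝ} {g : ℝ → ℝ} {t : ℝ} (hA : A.IsHermitian)
    (hf : ∀ i, HasDerivAt (fun t => f t (hA.eigenvalues i)) (g (hA.eigenvalues i)) t) :
    HasDerivAt (fun t => matFun (f t) A) (matFun g A) t := by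
  simp only [matFun_eq_sum_smul_eigenProj _ hA]
  exact HasDerivAt.fun_sum fun i _ => (hf i).smul_const _

theorem hasDerivAt_matRPow (hA : A.PosDef) (t : ℝ) :
    HasDerivAt (matRPow A) (matFun (fun x => x ^ t * Real.log x) A) t :=
  hasDerivAt_matFun hA.1 fun i =>
    (Real.hasStrictDerivAt_const_rpow (hA.eigenvalues_pos i) t).hasDerivAt

theorem hasDerivAt_matRPow_zero (hA : A.PosDef) : HasDerivAt (matRPow A) (matLog A) 0 := by
  simpa [matLog] using hasDerivAt_matRPow hA 0

def sandwichTrace (ρ σ : Matrix m m ℂ) (s : ℝ) : ℝ :=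
  (ρ * matRPow σ (s / 2) * matRPow ρ (-s) * matRPow σ (s / 2)).trace.re

theorem sandwichTrace_zero {ρ σ : Matrix m m ℂ} (hρ : ρ.IsHermitian) (hσ : σ.IsHermitian) :
    sandwichTrace ρ σ 0 = ρ.trace.re := by
  simp [sandwichTrace, matRPow_zero hρ, matRPow_zero hσ]

theorem hasDerivAt_sandwichTrace {ρ σ : Matrix m m ℂ} (hρ : ρ.PosDef) (hσ : σ.PosDef) :
    HasDerivAt (sandwichTrace ρ σ) (-relEnt ρ σ) 0 := by
  have hσ_half := (hasDerivAt_matRPow_zero hσ).scomp_of_eq (0 : ℝ)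
    ((hasDerivAt_id (0 : ℝ)).div_const 2) (zero_div 2).symm
  have hρ_neg := (hasDerivAt_matRPow_zero hρ).scomp_of_eq (0 : ℝ) (hasDerivAt_neg (0 : ℝ))
    neg_zero.symm
  convert (((hσ_half.const_mul ρ).mul hρ_neg).mul hσ_half).re_trace using 1
  · rfl
  · rw [relEnt, ← Complex.neg_re, ← trace_neg]
    congr 2
    simp only [Pi.mul_apply, Function.comp_apply, id_eq, zero_div, neg_zero, matRPow_zero hρ.1,
      matRPow_zero hσ.1, mul_one, mul_smul_comm, mul_sub]
    module

end FunctionalCalculus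

theorem HasDerivAt.eventually_nhdsGT_lt_of_neg {g : ℝ → ℝ} {g' x : ℝ} (hg : HasDerivAt g g' x)
    (hg' : g' < 0) : ∀ᶠ y in 𝓝[>] x, g y < g x := by
  filter_upwards [hg.hasDerivWithinAt.limsup_slope_le' (s := Set.Ioi x) (lt_irrefl x) hg',
    self_mem_nhdsWithin] with y hslope hxy
  exact (slope_neg_iff_of_le (le_of_lt hxy)).mp hslope

theorem exists_mul_sub_neg_of_lt_deriv {ψ : ℝ → ℝ} {D a : ℝ} (hψ0 : ψ 0 = 0)
    (hψ : HasDerivAt ψ D 0) (ha : a < D) : ∃ s : ℝ, 0 ≤ s ∧ s ≤ 1 ∧ a * s - ψ s < 0 := by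
  have hg : HasDerivAt (fun s => a * s - ψ s) (a - D) 0 := by
    simpa using ((hasDerivAt_id (0 : ℝ)).const_mul a).fun_sub hψ
  obtain ⟨s, hs_neg, hs_pos, hs_le⟩ :=
    ((hg.eventually_nhdsGT_lt_of_neg (sub_neg.mpr ha)).and (Ioc_mem_nhdsGT zero_lt_one)).exists
  exact ⟨s, hs_pos.le, hs_le, by simpa [hψ0] using hs_neg⟩

theorem psi_properties_general {d : ℕ} (ρ σ : Matrix (Fin d) (Fin d) ℂ)
    (hρ : IsDensity ρ) (hρpd : ρ.PosDef) (hσpd : σ.PosDef) :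
    (fun s : ℝ => -Real.log
        ((ρ * matRPow σ (s / 2) * matRPow ρ (-s) * matRPow σ (s / 2)).trace.re)) 0 = 0
    ∧ HasDerivAt (fun s : ℝ => -Real.log
        ((ρ * matRPow σ (s / 2) * matRPow ρ (-s) * matRPow σ (s / 2)).trace.re))
        (relEnt ρ σ) 0
    ∧ ∀ a : ℝ, a < relEnt ρ σ → ∃ s : ℝ, 0 ≤ s ∧ s ≤ 1 ∧
        a * s - (-Real.log
          ((ρ * matRPow σ (s / 2) * matRPow ρ (-s) * matRPow σ (s / 2)).trace.re)) < 0 := by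
  have h0 : sandwichTrace ρ σ 0 = 1 := by simp [sandwichTrace_zero hρpd.1 hσpd.1, hρ.2]
  have hψ0 : -Real.log (sandwichTrace ρ σ 0) = 0 := by simp [h0]
  have hψ : HasDerivAt (fun s => -Real.log (sandwichTrace ρ σ s)) (relEnt ρ σ) 0 := by
    simpa [h0] using ((hasDerivAt_sandwichTrace hρpd hσpd).log (by simp [h0])).fun_neg
  exact ⟨hψ0, hψ, fun a ha => exists_mul_sub_neg_of_lt_deriv hψ0 hψ ha⟩

/-- **Properties of the exponent function** `ψ(s) = −log Tr[ρ σ^{s/2} ρ^{−s} σ^{s/2}]`: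
`ψ(0) = 0`, `ψ'(0) = D(ρ‖σ)`, and consequently for every `a < D(ρ‖σ)` there is
`s ∈ [0,1]` with `a·s − ψ(s) < 0`. -/
theorem psi_properties {d : ℕ} (hd : 0 < d) (ρ σ : Matrix (Fin d) (Fin d) ℂ)
    (hρ : IsDensity ρ) (hσ : IsDensity σ) (hρpd : ρ.PosDef) (hσpd : σ.PosDef) :
    (fun s : ℝ => -Real.log
        ((ρ * matRPow σ (s / 2) * matRPow ρ (-s) * matRPow σ (s / 2)).trace.re)) 0 = 0
    ∧ HasDerivAt (fun s : ℝ => -Real.log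
        ((ρ * matRPow σ (s / 2) * matRPow ρ (-s) * matRPow σ (s / 2)).trace.re))
        (relEnt ρ σ) 0
    ∧ ∀ a : ℝ, a < relEnt ρ σ → ∃ s : ℝ, 0 ≤ s ∧ s ≤ 1 ∧
        a * s - (-Real.log
          ((ρ * matRPow σ (s / 2) * matRPow ρ (-s) * matRPow σ (s / 2)).trace.re)) < 0 :=
  psi_properties_general ρ σ hρ hρpd hσpd

end
end
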